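/- arXiv:math/0306198 — 2 statements merged into one kernel-verified Lean document; each statement's English description precedes it below -/
import Mathlib

section
/- Fix r ≥ 1. Define for an r-tuple of Young diagrams Y⃗ = (Y_1,...,Y_r) and indices α, β the product n^{Y⃗}_{α,β}(ε_1,ε_2,a⃗) = ∏_{s∈Y_α} (−l_{Y_β}(s)ε_1 + (a_{Y_α}(s)+1)ε_2 + a_β − a_α) · ∏_{t∈Y_β} ((l_{Y_α}(t)+1)ε_1 − a_{Y_β}(t)ε_2 + a_β − a_α), and Z(ε_1,ε_2,a⃗;q) = ∑_{Y⃗} q^{|Y⃗|} / ∏_{α,β=1}^r n^{Y⃗}_{α,β}(ε_1,ε_2,a⃗). Then Z(ε_2, ε_1, a⃗; q) = Z(ε_1, ε_2, a⃗; q) as formal power series in q with coefficients in the rational function field Q(ε_1, ε_2, a_1, ..., a_r). -/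
noncomputable section

/-- Arm-length of `s = (i,j)` (0-indexed) in `Y`; may be negative outside `Y`. -/
def armLen (Y : YoungDiagram) (s : ℕ × ℕ) : ℤ := (Y.rowLen s.1 : ℤ) - s.2 - 1

/-- Leg-length of `s = (i,j)` (0-indexed) in `Y`; may be negative outside `Y`. -/
def legLen (Y : YoungDiagram) (s : ℕ × ℕ) : ℤ := (Y.colLen s.2 : ℤ) - s.1 - 1

/-- `n^{Y⃗}_{α,β}(ε₁,ε₂,a⃗) = ∏_{s∈Y_α}(−l_{Y_β}(s)ε₁ + (a_{Y_α}(s)+1)ε₂ + a_β − a_α)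
  · ∏_{t∈Y_β}((l_{Y_α}(t)+1)ε₁ − a_{Y_β}(t)ε₂ + a_β − a_α)`. -/
def nYab {K : Type*} [CommRing K] {r : ℕ} (Y : Fin r → YoungDiagram) (α β : Fin r)
    (e1 e2 : K) (a : Fin r → K) : K :=
  (∏ s ∈ (Y α).cells,
      ((-(legLen (Y β) s : K)) * e1 + ((armLen (Y α) s : K) + 1) * e2 + a β - a α)) *
    ∏ t ∈ (Y β).cells,
      (((legLen (Y α) t : K) + 1) * e1 - (armLen (Y β) t : K) * e2 + a β - a α)

/-- The `n`-th coefficient `Z_n(ε₁,ε₂,a⃗)` of Nekrasov's partition function: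
the sum over `r`-tuples of Young diagrams of total size `n` of
`1/∏_{α,β} n^{Y⃗}_{α,β}(ε₁,ε₂,a⃗)`. -/
def Zcoeff (K : Type*) [Field K] (r n : ℕ) (e1 e2 : K) (a : Fin r → K) : K :=
  ∑ᶠ Y ∈ {Y : Fin r → YoungDiagram | (∑ α, (Y α).card) = n},
    (∏ α, ∏ β, nYab Y α β e1 e2 a)⁻¹

/-- The field ℚ(ε₁,ε₂,a₁,…,a_r). -/
abbrev K (r : ℕ) : Type := FractionRing (MvPolynomial (Fin (r + 2)) ℚ)

def gen (r : ℕ) (i : Fin (r + 2)) : K r :=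
  algebraMap (MvPolynomial (Fin (r + 2)) ℚ) (K r) (MvPolynomial.X i)

/-!
Transposing every diagram while exchanging `ε₁ ↔ ε₂` turns each factor of `n_{α,β}` into the
factor at the transposed cell, except that the two products over `Y_α` and `Y_β` trade their
shapes. So it suffices that the multiset of weights `(-l_ν(s), a_μ(s) + 1)` for `s ∈ μ` and
`(l_μ(t) + 1, -a_ν(t))` for `t ∈ ν` is unchanged when the two kinds of weight are exchanged
between `μ` and `ν`. Its generating function in `ℤ[x^±1, y^±1]` telescopes along columns to
`x y V_μ + V̄_ν - (1 - x)(1 - y) V_μ V̄_ν`, where `V_μ = ∑_{(i,j) ∈ μ} x^i y^j` and `V̄` inverts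
`x` and `y`; this expression is invariant under `x ↔ y` combined with transposing `μ` and `ν`.
-/

open Finset

namespace YoungDiagram

theorem cells_transpose (μ : YoungDiagram) :
    μ.transpose.cells = μ.cells.map (Equiv.prodComm ℕ ℕ).toEmbedding := by
  ext ⟨i, j⟩
  simp

theorem card_transpose (μ : YoungDiagram) : μ.transpose.card = μ.card := by
  simp [YoungDiagram.card, cells_transpose]

theorem sum_cells_eq_sum_range_rowLen {A : Type*} [AddCommMonoid A] (μ : YoungDiagram)
    (f : ℕ × ℕ → A) :
    ∑ c ∈ μ.cells, f c = ∑ i ∈ range (μ.colLen 0), ∑ j ∈ range (μ.rowLen i), f (i, j) := by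
  refine sum_finset_product _ _ _ fun ⟨i, j⟩ => ?_
  simp only [mem_cells, mem_range, ← mem_iff_lt_rowLen, ← mem_iff_lt_colLen]
  exact ⟨fun h => ⟨μ.up_left_mem le_rfl (Nat.zero_le j) h, h⟩, And.right⟩

theorem sum_range_sum_range_colLen {A : Type*} [AddCommMonoid A] (μ : YoungDiagram) (n : ℕ)
    (f : ℕ → ℕ → A) :
    ∑ j ∈ range n, ∑ k ∈ range (μ.colLen j), f j k
      = ∑ k ∈ range (μ.colLen 0), ∑ j ∈ range (min n (μ.rowLen k)), f j k := by
  refine sum_comm' fun j k => ?_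
  simp only [mem_range, lt_min_iff, ← mem_iff_lt_rowLen, ← mem_iff_lt_colLen]
  exact ⟨fun h => ⟨⟨h.1, h.2⟩, μ.up_left_mem le_rfl (Nat.zero_le j) h.2⟩,
    fun h => ⟨h.1.1, h.1.2⟩⟩

end YoungDiagram

theorem legLen_transpose (μ : YoungDiagram) (s : ℕ × ℕ) :
    legLen μ.transpose s.swap = armLen μ s := by
  simp [legLen, armLen, YoungDiagram.colLen_transpose]

theorem armLen_transpose (μ : YoungDiagram) (s : ℕ × ℕ) :
    armLen μ.transpose s.swap = legLen μ s := by
  simp [legLen, armLen, YoungDiagram.rowLen_transpose]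

theorem sum_range_neg_eq_sum_range_reflect {A : Type*} [AddCommMonoid A] (f : ℤ → A) (n : ℕ) :
    ∑ l ∈ range n, f (-l) = ∑ j ∈ range n, f (j + 1 - n) := by
  rw [← sum_range_reflect]
  exact sum_congr rfl fun l hl => congrArg f (by have := mem_range.mp hl; omega)

theorem sum_range_min_sub {A : Type*} [AddCommGroup A] (f : ℤ → A) (a b : ℕ) :
    ∑ j ∈ range (min a b), (f (a - j) - f (j + 1 - b))
      = ∑ l ∈ range b, (f (a - l) - f (-l)) := by
  rw [sum_sub_distrib, sum_sub_distrib, sum_range_neg_eq_sum_range_reflect]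
  rcases le_total b a with hba | hab
  · rw [min_eq_right hba]
  · obtain ⟨c, rfl⟩ := Nat.exists_eq_add_of_le hab
    have hc : ∑ l ∈ range c, f (a - (a + l : ℕ))
        = ∑ j ∈ range c, f ((a + j : ℕ) + 1 - (a + c : ℕ)) :=
      calc ∑ l ∈ range c, f (a - (a + l : ℕ)) = ∑ l ∈ range c, f (-l) :=
            sum_congr rfl fun l _ => congrArg f (by omega)
        _ = ∑ j ∈ range c, f (j + 1 - c) := sum_range_neg_eq_sum_range_reflect f c
        _ = ∑ j ∈ range c, f ((a + j : ℕ) + 1 - (a + c : ℕ)) :=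
            sum_congr rfl fun j _ => congrArg f (by omega)
    simp only [min_eq_left hab, sum_range_add, hc]
    abel

namespace Nekrasov

/-- `ℤ[x^±1, y^±1]`, with `mono (a, b) = x^a y^b`. -/
abbrev Laurent₂ := AddMonoidAlgebra ℤ (ℤ × ℤ)

def mono (v : ℤ × ℤ) : Laurent₂ := AddMonoidAlgebra.single v 1

theorem mono_add (u v : ℤ × ℤ) : mono (u + v) = mono u * mono v := by
  simp [mono, AddMonoidAlgebra.single_mul_single]

theorem mono_add_nsmul (p u : ℤ × ℤ) (n : ℕ) :
    mono (p + n • u) = mono p + (mono u - 1) * ∑ k ∈ range n, mono (p + k • u) := by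
  induction n with
  | zero => simp
  | succ n ih =>
    rw [sum_range_succ, mul_add, ← add_assoc, ← ih, succ_nsmul, ← add_assoc, mono_add]
    ring

theorem coeff_sum_map_mono (m : Multiset (ℤ × ℤ)) (v : ℤ × ℤ) :
    (m.map mono).sum.coeff v = m.count v := by
  induction m using Multiset.induction_on with
  | empty => simp
  | cons a m ih =>
    simp [ih, mono, Finsupp.single_apply, Multiset.count_cons, eq_comm, add_comm]

theorem sum_map_mono_injective :
    Function.Injective fun m : Multiset (ℤ × ℤ) => (m.map mono).sum :=
  fun m m' h => Multiset.ext.mpr fun v => by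
    simpa only [coeff_sum_map_mono, Nat.cast_inj] using congrArg (·.coeff v) h

def swapEquiv : Laurent₂ ≃ₐ[ℤ] Laurent₂ := AddMonoidAlgebra.domCongr ℤ ℤ (AddEquiv.prodComm)

def negEquiv : Laurent₂ ≃ₐ[ℤ] Laurent₂ := AddMonoidAlgebra.domCongr ℤ ℤ (AddEquiv.neg _)

@[simp] theorem swapEquiv_mono (v : ℤ × ℤ) : swapEquiv (mono v) = mono v.swap := by
  simp [swapEquiv, mono]

@[simp] theorem negEquiv_mono (v : ℤ × ℤ) : negEquiv (mono v) = mono (-v) := by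
  simp [negEquiv, mono]

variable (μ ν : YoungDiagram)

def weightFst (s : ℕ × ℕ) : ℤ × ℤ := (-legLen ν s, armLen μ s + 1)

def weightSnd (t : ℕ × ℕ) : ℤ × ℤ := (legLen μ t + 1, -armLen ν t)

theorem weightSnd_eq (t : ℕ × ℕ) : weightSnd μ ν t = (1, 1) - weightFst ν μ t := by
  ext <;> simp [weightSnd, weightFst, add_comm]

theorem weightFst_transpose (s : ℕ × ℕ) :
    weightFst μ.transpose ν.transpose s.swap = (weightSnd μ ν s).swap := by
  simp [weightFst, weightSnd, legLen_transpose, armLen_transpose]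

theorem weightSnd_transpose (s : ℕ × ℕ) :
    weightSnd μ.transpose ν.transpose s.swap = (weightFst μ ν s).swap := by
  simp [weightFst, weightSnd, legLen_transpose, armLen_transpose]

def cellSum : Laurent₂ := ∑ c ∈ μ.cells, mono (c.1, c.2)

/-- The sum of `x^(i-k) y^(μ_i - j)` over pairs of cells `(i, j) ∈ μ`, `(k, j) ∈ ν` in a common
column. -/
def columnPairSum : Laurent₂ :=
  ∑ i ∈ range (μ.colLen 0), ∑ k ∈ range (ν.colLen 0),
    ∑ j ∈ range (min (μ.rowLen i) (ν.rowLen k)), mono (i - k, μ.rowLen i - j)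

theorem mono_weightFst (i j : ℕ) :
    mono (weightFst μ ν (i, j))
      = mono (i + 1, μ.rowLen i - j)
        + (1 - mono (1, 0)) * ∑ k ∈ range (ν.colLen j), mono (i - k, μ.rowLen i - j) := by
  have hx : mono (-1, 0) * mono (1, 0) = 1 := by rw [← mono_add]; rfl
  have hw : weightFst μ ν (i, j)
      = ((i + 1, μ.rowLen i - j) : ℤ × ℤ) + ν.colLen j • ((-1, 0) : ℤ × ℤ) := by
    simp [weightFst, legLen, armLen, Prod.ext_iff]; ring
  have hsum : ∑ k ∈ range (ν.colLen j),
        mono (((i + 1, μ.rowLen i - j) : ℤ × ℤ) + k • ((-1, 0) : ℤ × ℤ))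
      = mono (1, 0) * ∑ k ∈ range (ν.colLen j), mono (i - k, μ.rowLen i - j) := by
    rw [mul_sum]
    refine sum_congr rfl fun k _ => ?_
    rw [← mono_add]
    congr 1
    simp [Prod.ext_iff]; ring
  rw [hw, mono_add_nsmul, hsum]
  linear_combination (∑ k ∈ range (ν.colLen j), mono (i - k, μ.rowLen i - j)) * hx

theorem sum_mono_weightFst :
    ∑ s ∈ μ.cells, mono (weightFst μ ν s)
      = mono (1, 1) * cellSum μ + (1 - mono (1, 0)) * columnPairSum μ ν := by
  have hrow (i : ℕ) : ∑ j ∈ range (μ.rowLen i), mono (i + 1, μ.rowLen i - j)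
      = mono (1, 1) * ∑ j ∈ range (μ.rowLen i), mono (i, j) := by
    rw [mul_sum, ← sum_range_reflect]
    refine sum_congr rfl fun j hj => ?_
    have := mem_range.mp hj
    rw [← mono_add]
    congr 1
    simp [Prod.ext_iff]; omega
  simp only [cellSum, columnPairSum, YoungDiagram.sum_cells_eq_sum_range_rowLen, mono_weightFst,
    sum_add_distrib, hrow, ← mul_sum, YoungDiagram.sum_range_sum_range_colLen]

theorem sum_range_min_mono_sub (d : ℤ) (a b : ℕ) :
    ∑ j ∈ range (min a b), (mono (d, a - j) - mono (d, j + 1 - b))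
      = (mono (0, 1) - 1) * ∑ j ∈ range a, ∑ l ∈ range b, mono (d, j - l) := by
  rw [sum_range_min_sub (fun e => mono (d, e)), sum_comm, mul_sum]
  refine sum_congr rfl fun l _ => ?_
  have h := mono_add_nsmul (d, -l) (0, 1) a
  have hexp (n : ℕ) : ((d, -l) : ℤ × ℤ) + n • ((0, 1) : ℤ × ℤ) = ((d, n - l) : ℤ × ℤ) := by
    ext <;> simp [add_comm, sub_eq_add_neg]
  simp only [hexp] at h
  rw [h]
  ring

theorem cellSum_mul_negEquiv_cellSum :
    cellSum μ * negEquiv (cellSum ν)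
      = ∑ i ∈ range (μ.colLen 0), ∑ k ∈ range (ν.colLen 0),
          ∑ j ∈ range (μ.rowLen i), ∑ l ∈ range (ν.rowLen k), mono (i - k, j - l) := by
  simp only [cellSum, map_sum, negEquiv_mono, YoungDiagram.sum_cells_eq_sum_range_rowLen,
    sum_mul_sum, ← mono_add, Prod.neg_mk, Prod.mk_add_mk, ← sub_eq_add_neg]

theorem mono_mul_negEquiv_columnPairSum :
    mono (0, 1) * negEquiv (columnPairSum ν μ)
      = ∑ i ∈ range (μ.colLen 0), ∑ k ∈ range (ν.colLen 0),
          ∑ j ∈ range (min (μ.rowLen i) (ν.rowLen k)), mono (i - k, j + 1 - ν.rowLen k) := by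
  rw [columnPairSum, sum_comm]
  simp only [map_sum, negEquiv_mono, mul_sum, ← mono_add, min_comm (ν.rowLen _)]
  refine sum_congr rfl fun i _ => sum_congr rfl fun k _ => sum_congr rfl fun j _ => ?_
  congr 1
  simp [Prod.ext_iff]; ring

theorem columnPairSum_sub :
    columnPairSum μ ν - mono (0, 1) * negEquiv (columnPairSum ν μ)
      = (mono (0, 1) - 1) * (cellSum μ * negEquiv (cellSum ν)) := by
  rw [mono_mul_negEquiv_columnPairSum, cellSum_mul_negEquiv_cellSum, columnPairSum]
  simp only [← sum_sub_distrib, sum_range_min_mono_sub, mul_sum]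

theorem character_eq :
    ∑ s ∈ μ.cells, mono (weightFst μ ν s) + ∑ t ∈ ν.cells, mono (weightSnd μ ν t)
      = mono (1, 1) * cellSum μ + negEquiv (cellSum ν)
        - (1 - mono (1, 0)) * (1 - mono (0, 1)) * (cellSum μ * negEquiv (cellSum ν)) := by
  have hSnd : ∑ t ∈ ν.cells, mono (weightSnd μ ν t)
      = mono (1, 1) * negEquiv (∑ t ∈ ν.cells, mono (weightFst ν μ t)) := by
    simp only [weightSnd_eq, map_sum, negEquiv_mono, mul_sum, ← mono_add, sub_eq_add_neg]
  have h₁ : mono (1, 1) * mono (-1, -1) = 1 := by rw [← mono_add]; rfl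
  have h₂ : mono (1, 1) * mono (-1, 0) = mono (0, 1) := by rw [← mono_add]; rfl
  have h₃ : mono (1, 1) = mono (1, 0) * mono (0, 1) := by rw [← mono_add]; rfl
  rw [hSnd, sum_mono_weightFst, sum_mono_weightFst]
  simp only [map_add, map_mul, map_sub, map_one, negEquiv_mono, Prod.neg_mk, neg_zero]
  linear_combination (1 - mono (1, 0)) * columnPairSum_sub μ ν
    + negEquiv (cellSum ν) * h₁ - negEquiv (columnPairSum ν μ) * h₂
    + negEquiv (columnPairSum ν μ) * h₃

theorem character_eq_swap :
    ∑ s ∈ μ.cells, mono (weightSnd μ ν s) + ∑ t ∈ ν.cells, mono (weightFst μ ν t)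
      = mono (1, 1) * cellSum μ + negEquiv (cellSum ν)
        - (1 - mono (1, 0)) * (1 - mono (0, 1)) * (cellSum μ * negEquiv (cellSum ν)) := by
  have h := congrArg swapEquiv (character_eq μ.transpose ν.transpose)
  simp only [cellSum, map_add, map_sub, map_mul, map_one, map_sum, swapEquiv_mono,
    negEquiv_mono, YoungDiagram.cells_transpose, sum_map, Equiv.coe_toEmbedding,
    Equiv.prodComm_apply, weightFst_transpose, weightSnd_transpose, Prod.swap_swap,
    Prod.swap_prod_mk, Prod.fst_swap, Prod.snd_swap, Prod.neg_mk] at h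
  simp only [cellSum, map_sum, negEquiv_mono, Prod.neg_mk]
  linear_combination h

theorem weight_multiset_symm :
    μ.cells.val.map (weightFst μ ν) + ν.cells.val.map (weightSnd μ ν)
      = μ.cells.val.map (weightSnd μ ν) + ν.cells.val.map (weightFst μ ν) := by
  apply sum_map_mono_injective
  simp only [Multiset.map_add, Multiset.sum_add, Multiset.map_map, Function.comp_def,
    ← sum_eq_multiset_sum]
  exact (character_eq μ ν).trans (character_eq_swap μ ν).symm

theorem prod_weight_symm {A : Type*} [CommMonoid A] (w : ℤ × ℤ → A) :
    (∏ s ∈ μ.cells, w (weightFst μ ν s)) * ∏ t ∈ ν.cells, w (weightSnd μ ν t)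
      = (∏ s ∈ μ.cells, w (weightSnd μ ν s)) * ∏ t ∈ ν.cells, w (weightFst μ ν t) := by
  simpa only [Multiset.map_add, Multiset.prod_add, Multiset.map_map, Function.comp_def,
    ← prod_eq_multiset_prod] using congrArg (fun m => (m.map w).prod) (weight_multiset_symm μ ν)

def evalWeight {R : Type*} [CommRing R] (e1 e2 c : R) (p : ℤ × ℤ) : R := p.1 * e1 + p.2 * e2 + c

theorem evalWeight_swap {R : Type*} [CommRing R] (e1 e2 c : R) (p : ℤ × ℤ) :
    evalWeight e2 e1 c p.swap = evalWeight e1 e2 c p := by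
  simp only [evalWeight, Prod.fst_swap, Prod.snd_swap]
  ring

theorem nYab_eq_prod_evalWeight {R : Type*} [CommRing R] {r : ℕ} (Y : Fin r → YoungDiagram)
    (α β : Fin r) (e1 e2 : R) (a : Fin r → R) :
    nYab Y α β e1 e2 a
      = (∏ s ∈ (Y α).cells, evalWeight e1 e2 (a β - a α) (weightFst (Y α) (Y β) s))
        * ∏ t ∈ (Y β).cells, evalWeight e1 e2 (a β - a α) (weightSnd (Y α) (Y β) t) := by
  unfold nYab
  congr 1 <;> refine prod_congr rfl fun s _ => ?_ <;>
    simp only [evalWeight, weightFst, weightSnd] <;> push_cast <;> ring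

theorem nYab_transpose {R : Type*} [CommRing R] {r : ℕ} (Y : Fin r → YoungDiagram)
    (α β : Fin r) (e1 e2 : R) (a : Fin r → R) :
    nYab (fun γ => (Y γ).transpose) α β e2 e1 a = nYab Y α β e1 e2 a := by
  simp only [nYab_eq_prod_evalWeight, YoungDiagram.cells_transpose, prod_map,
    Equiv.coe_toEmbedding, Equiv.prodComm_apply, weightFst_transpose, weightSnd_transpose,
    evalWeight_swap]
  exact (prod_weight_symm _ _ _).symm

theorem Zcoeff_swap {F : Type*} [Field F] (r n : ℕ) (e1 e2 : F) (a : Fin r → F) :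
    Zcoeff F r n e2 e1 a = Zcoeff F r n e1 e2 a := by
  let transposeAll (Y : Fin r → YoungDiagram) : Fin r → YoungDiagram :=
    fun γ => (Y γ).transpose
  have hinv : ∀ Y, transposeAll (transposeAll Y) = Y :=
    fun Y => funext fun γ => (Y γ).transpose_transpose
  have hmaps : Set.MapsTo transposeAll {Y | ∑ α, (Y α).card = n} {Y | ∑ α, (Y α).card = n} :=
    fun Y hY => by simpa [transposeAll, YoungDiagram.card_transpose] using hY
  refine finsum_mem_eq_of_bijOn transposeAll
    (Set.InvOn.bijOn ⟨fun Y _ => hinv Y, fun Y _ => hinv Y⟩ hmaps hmaps) fun Y _ => ?_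
  simp only [transposeAll, nYab_transpose]

end Nekrasov

/-- `Z(ε₂, ε₁, a⃗; q) = Z(ε₁, ε₂, a⃗; q)` as formal power series in `q`
over ℚ(ε₁,ε₂,a₁,…,a_r), i.e. coefficientwise. -/
theorem Z_symm_eps (r : ℕ) :
    ∀ n : ℕ,
      Zcoeff (K r) r n (gen r 1) (gen r 0) (fun α => gen r α.succ.succ)
        = Zcoeff (K r) r n (gen r 0) (gen r 1) (fun α => gen r α.succ.succ) :=
  fun n => Nekrasov.Zcoeff_swap r n _ _ _
end
end

section
/- With Z(ε_1,ε_2,a⃗;q) defined as the sum ∑_{Y⃗} q^{|Y⃗|}/∏_{α,β} n^{Y⃗}_{α,β}(ε_1,ε_2,a⃗) over r-tuples of Young diagrams, one has Z(−ε_1, −ε_2, −a⃗; q) = Z(ε_1, ε_2, a⃗; q). -/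
/-! Every factor of `n^{Y⃗}_{α,β}` is homogeneous linear in `(ε₁, ε₂, a⃗)`, so negating all variables
multiplies `n^{Y⃗}_{α,β}` by `(-1)^{|Y_α|+|Y_β|}`. Over all pairs `(α, β)` these signs multiply to
`(-1)^{2r|Y⃗|} = 1`, so every summand of `Z_n` is unchanged. -/

noncomputable section

theorem Finset.prod_prod_neg_one_pow_add {ι M : Type*} [CommMonoid M] [HasDistribNeg M]
    (s : Finset ι) (f : ι → ℕ) :
    ∏ i ∈ s, ∏ j ∈ s, (-1 : M) ^ (f i + f j) = 1 := by
  simp only [Finset.prod_pow_eq_pow_sum]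
  refine Even.neg_one_pow ⟨∑ i ∈ s, ∑ _j ∈ s, f i, ?_⟩
  simp only [Finset.sum_add_distrib]
  rw [Finset.sum_comm (f := fun _ j => f j)]

theorem nYab_neg {K : Type*} [CommRing K] {r : ℕ} (Y : Fin r → YoungDiagram) (α β : Fin r)
    (e1 e2 : K) (a : Fin r → K) :
    nYab Y α β (-e1) (-e2) (-a) = (-1) ^ ((Y α).card + (Y β).card) * nYab Y α β e1 e2 a := by
  simp only [nYab, Pi.neg_apply]
  rw [pow_add, mul_mul_mul_comm, ← Finset.prod_neg, ← Finset.prod_neg]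
  congr 1 <;> exact Finset.prod_congr rfl fun _ _ => by ring

theorem prod_prod_nYab_neg {K : Type*} [CommRing K] {r : ℕ} (Y : Fin r → YoungDiagram)
    (e1 e2 : K) (a : Fin r → K) :
    ∏ α, ∏ β, nYab Y α β (-e1) (-e2) (-a) = ∏ α, ∏ β, nYab Y α β e1 e2 a := by
  simp only [nYab_neg, Finset.prod_mul_distrib]
  rw [Finset.prod_prod_neg_one_pow_add, one_mul]

theorem Zcoeff_neg (K : Type*) [Field K] (r n : ℕ) (e1 e2 : K) (a : Fin r → K) :
    Zcoeff K r n (-e1) (-e2) (-a) = Zcoeff K r n e1 e2 a :=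
  finsum_mem_congr rfl fun Y _ => by rw [prod_prod_nYab_neg]

/-- `Z(−ε₁, −ε₂, −a⃗; q) = Z(ε₁, ε₂, a⃗; q)`, coefficientwise in `q`. -/
theorem Z_symm_neg (r : ℕ) :
    ∀ n : ℕ,
      Zcoeff (K r) r n (-(gen r 0)) (-(gen r 1)) (fun α => -(gen r α.succ.succ))
        = Zcoeff (K r) r n (gen r 0) (gen r 1) (fun α => gen r α.succ.succ) :=
  fun n => Zcoeff_neg (K r) r n _ _ _
end
end
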